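/- Let p ≥ 1 be an integer and θ > 0, let (x, λ, y) be a global solution of the closed-loop control system on [0, ∞) with λ nondecreasing, and let z* ∈ H with 0 ∈ A z*. Then for every t > 0: ‖x(t) − y(t)‖² ≤ ‖x(0) − z*‖²/(2t), and consequently the residue satisfies inf_{ξ ∈ A(y(t))} ‖ξ‖ ≤ ‖x(t) − y(t)‖/λ(t) ≤ θ^{−1}·(‖x(0) − z*‖²/(2t))^{p/2}; in particular the pointwise convergence rate in terms of the residue function is O(t^{−p/2}). -/

import Mathlib

/-!
Write `x - y = λ • a` with `a ∈ A y`. The velocity `y - x` has nonincreasing norm: for `p ≥ 2`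
this is forced by `λ ‖y - x‖ ^ (p - 1) = θ` and the growth of `λ`, while for `p = 1` the system
is the autonomous flow `x' = y - x`, `x - y ∈ θ A y`, whose trajectories (in particular `x` and
its time shifts) never move apart. Monotonicity of `A` at the zero `z*` gives
`d/dt ‖x - z*‖² ≤ -2 ‖x - y‖²`; integrating over `[0, t]`, where `‖x - y‖ ≥ ‖x(t) - y(t)‖`, yields
`2 t ‖x(t) - y(t)‖² ≤ ‖x(0) - z*‖²`. The residue is at most `‖a(t)‖ = ‖x(t) - y(t)‖ / λ(t)`, which
the algebraic equation turns into `‖x(t) - y(t)‖ ^ p / θ`.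
-/

open scoped Pointwise
open RealInnerProductSpace Filter Topology Set Metric

/-- A solution of the closed-loop control system on the time set `T`:
`x` is continuously differentiable with `x'(t) = y(t) - x(t)`,
`y(t)` is the resolvent point `(I + λ(t)A)⁻¹ x(t)` (i.e. `x(t) - y(t) ∈ λ(t) • A (y t)`),
`λ` is continuous and positive, and the algebraic equation
`λ(t) ‖y(t) - x(t)‖^{p-1} = θ` holds. -/
def IsCLSolution {H : Type*} [NormedAddCommGroup H] [InnerProductSpace ℝ H]
    (A : H → Set H) (p : ℕ) (θ : ℝ) (T : Set ℝ)
    (x : ℝ → H) (lam : ℝ → ℝ) (y : ℝ → H) : Prop :=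
  (∀ t ∈ T, 0 < lam t) ∧ ContinuousOn lam T ∧
  (∀ t ∈ T, x t - y t ∈ lam t • A (y t)) ∧
  (∀ t ∈ T, HasDerivWithinAt x (y t - x t) T t) ∧
  ContinuousOn (fun t => y t - x t) T ∧
  (∀ t ∈ T, lam t * ‖y t - x t‖ ^ (p - 1) = θ)

lemma Convex.antitoneOn_of_hasDerivWithinAt_nonpos {D : Set ℝ} (hD : Convex ℝ D) {f f' : ℝ → ℝ}
    (hf : ∀ t ∈ D, HasDerivWithinAt f (f' t) D t) (hf' : ∀ t ∈ interior D, f' t ≤ 0) :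
    AntitoneOn f D :=
  _root_.antitoneOn_of_hasDerivWithinAt_nonpos hD (fun t ht => (hf t ht).continuousWithinAt)
    (fun t ht => (hf t (interior_subset ht)).mono interior_subset) hf'

section RightDerivative

variable {E : Type*} [NormedAddCommGroup E] [NormedSpace ℝ E]

lemma HasDerivWithinAt.tendsto_slope_zero_right_of_Ici {f : ℝ → E} {f' : E} {t : ℝ}
    (hf : HasDerivWithinAt f f' (Ici t) t) :
    Tendsto (fun h => h⁻¹ • (f (t + h) - f t)) (𝓝[>] 0) (𝓝 f') := by
  have hslope := (hasDerivWithinAt_iff_tendsto_slope' (lt_irrefl t)).1 hf.Ioi_of_Ici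
  have hshift : Tendsto (t + ·) (𝓝[>] 0) (𝓝[>] t) := by
    have h := (map_add_left_nhdsGT (c := t) (a := (0 : ℝ))).le
    rwa [add_zero] at h
  simpa [Function.comp_def, slope_def_module] using hslope.comp hshift

lemma antitoneOn_norm_of_antitoneOn_norm_sub_shift {f f' : ℝ → E} {s : Set ℝ}
    (hf : ∀ t ∈ s, HasDerivWithinAt f (f' t) (Ici t) t)
    (hshift : ∀ h > 0, AntitoneOn (fun t => ‖f (t + h) - f t‖) s) :
    AntitoneOn (fun t => ‖f' t‖) s := by
  intro a ha b hb hab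
  refine le_of_tendsto_of_tendsto (hf b hb).tendsto_slope_zero_right_of_Ici.norm
    (hf a ha).tendsto_slope_zero_right_of_Ici.norm ?_
  filter_upwards [self_mem_nhdsWithin] with h (hh : 0 < h)
  simp only [norm_smul, norm_inv, Real.norm_of_nonneg hh.le]
  exact mul_le_mul_of_nonneg_left (hshift h hh ha hb hab) (inv_nonneg.2 hh.le)

end RightDerivative

lemma antitoneOn_of_mul_pow_eq_const {lam r : ℝ → ℝ} {s : Set ℝ} {n : ℕ} {θ : ℝ} (hn : n ≠ 0)
    (hlam : MonotoneOn lam s) (hpos : ∀ t ∈ s, 0 < lam t) (hr : ∀ t ∈ s, 0 ≤ r t)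
    (h : ∀ t ∈ s, lam t * r t ^ n = θ) : AntitoneOn r s := by
  intro a ha b hb hab
  have hle : lam a * r b ^ n ≤ lam a * r a ^ n := calc
    lam a * r b ^ n ≤ lam b * r b ^ n :=
      mul_le_mul_of_nonneg_right (hlam ha hb hab) (pow_nonneg (hr b hb) n)
    _ = lam a * r a ^ n := by rw [h a ha, h b hb]
  exact (pow_le_pow_iff_left₀ (hr b hb) (hr a ha) hn).1 (le_of_mul_le_mul_left hle (hpos a ha))

lemma div_eq_pow_div_of_mul_pow_pred_eq {l r θ : ℝ} {p : ℕ} (hp : 1 ≤ p) (hl : l ≠ 0)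
    (hθ : θ ≠ 0) (h : l * r ^ (p - 1) = θ) : r / l = r ^ p / θ := by
  rw [div_eq_div_iff hl hθ, ← h, ← pow_sub_one_mul (by omega : p ≠ 0)]
  ring

section MonotoneOperator

variable {H : Type*} [NormedAddCommGroup H] [InnerProductSpace ℝ H]

def IsMonotoneOperator (A : H → Set H) : Prop :=
  ∀ x y u v : H, u ∈ A x → v ∈ A y → 0 ≤ ⟪u - v, x - y⟫

lemma IsMonotoneOperator.smul {A : H → Set H} (hA : IsMonotoneOperator A) {c : ℝ} (hc : 0 ≤ c) :
    IsMonotoneOperator (fun x => c • A x) := by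
  rintro x y _ _ ⟨u, hu, rfl⟩ ⟨v, hv, rfl⟩
  rw [← smul_sub, real_inner_smul_left]
  exact mul_nonneg hc (hA x y u v hu hv)

lemma IsMonotoneOperator.antitoneOn_norm_sub_of_flows {B : H → Set H}
    (hB : IsMonotoneOperator B) {s : Set ℝ} (hs : Convex ℝ s) {x₁ y₁ x₂ y₂ : ℝ → H}
    (hx₁ : ∀ t ∈ s, HasDerivWithinAt x₁ (y₁ t - x₁ t) s t)
    (hx₂ : ∀ t ∈ s, HasDerivWithinAt x₂ (y₂ t - x₂ t) s t)
    (hy₁ : ∀ t ∈ s, x₁ t - y₁ t ∈ B (y₁ t)) (hy₂ : ∀ t ∈ s, x₂ t - y₂ t ∈ B (y₂ t)) :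
    AntitoneOn (fun t => ‖x₁ t - x₂ t‖) s := by
  have hsq : AntitoneOn (fun t => ‖x₁ t - x₂ t‖ ^ 2) s := by
    refine hs.antitoneOn_of_hasDerivWithinAt_nonpos
      (fun t ht => ((hx₁ t ht).sub (hx₂ t ht)).norm_sq) fun t ht => ?_
    have ht := interior_subset ht
    set d := (x₁ t - y₁ t) - (x₂ t - y₂ t)
    have hmono : 0 ≤ ⟪d, y₁ t - y₂ t⟫ := hB _ _ _ _ (hy₁ t ht) (hy₂ t ht)
    have hdecomp : ⟪x₁ t - x₂ t, (y₁ t - x₁ t) - (y₂ t - x₂ t)⟫ = -‖d‖ ^ 2 - ⟪d, y₁ t - y₂ t⟫ := by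
      rw [show x₁ t - x₂ t = d + (y₁ t - y₂ t) by simp only [d]; abel,
        show (y₁ t - x₁ t) - (y₂ t - x₂ t) = -d by simp only [d]; abel,
        inner_neg_right, inner_add_left, real_inner_self_eq_norm_sq, real_inner_comm]
      ring
    rw [Pi.sub_apply, hdecomp]
    linarith [sq_nonneg ‖d‖]
  exact fun a ha b hb hab =>
    (pow_le_pow_iff_left₀ (norm_nonneg _) (norm_nonneg _) two_ne_zero).1 (hsq ha hb hab)

lemma IsMonotoneOperator.antitoneOn_norm_velocity_of_flow {B : H → Set H}
    (hB : IsMonotoneOperator B) {x y : ℝ → H}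
    (hx : ∀ t ∈ Ici (0 : ℝ), HasDerivWithinAt x (y t - x t) (Ici 0) t)
    (hy : ∀ t ∈ Ici (0 : ℝ), x t - y t ∈ B (y t)) :
    AntitoneOn (fun t => ‖x t - y t‖) (Ici 0) := by
  have hvel : AntitoneOn (fun t => ‖y t - x t‖) (Ici 0) := by
    refine antitoneOn_norm_of_antitoneOn_norm_sub_shift
      (fun t ht => (hx t ht).mono (Ici_subset_Ici.2 ht)) fun h hh => ?_
    have hmaps : MapsTo (· + h) (Ici (0 : ℝ)) (Ici 0) := fun r hr => by
      simp only [mem_Ici] at hr ⊢; linarith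
    refine hB.antitoneOn_norm_sub_of_flows (convex_Ici 0) (fun r hr => ?_) hx
      (fun r hr => hy (r + h) (hmaps hr)) hy
    simpa [Function.comp_def] using
      (hx (r + h) (hmaps hr)).scomp r ((hasDerivWithinAt_id r _).add_const h) hmaps
  simpa only [norm_sub_rev (x _)] using hvel

lemma IsCLSolution.antitoneOn_norm_sub {A : H → Set H} (hA : IsMonotoneOperator A) {p : ℕ}
    {θ : ℝ} {x y : ℝ → H} {lam : ℝ → ℝ} (hsol : IsCLSolution A p θ (Ici 0) x lam y)
    (hlam : MonotoneOn lam (Ici 0)) :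
    AntitoneOn (fun t => ‖x t - y t‖) (Ici 0) := by
  obtain ⟨hpos, -, hres, hx, -, halg⟩ := hsol
  by_cases hp : p - 1 = 0
  · -- `λ ≡ θ`, so the system is autonomous
    have hlamθ : ∀ t ∈ Ici (0 : ℝ), lam t = θ := fun t ht => by simpa [hp] using halg t ht
    have hθ : 0 ≤ θ := hlamθ 0 self_mem_Ici ▸ (hpos 0 self_mem_Ici).le
    exact (hA.smul hθ).antitoneOn_norm_velocity_of_flow hx
      fun t ht => hlamθ t ht ▸ hres t ht
  · have hvel := antitoneOn_of_mul_pow_eq_const hp hlam hpos (fun t _ => norm_nonneg _) halg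
    simpa only [norm_sub_rev (x _)] using hvel

lemma two_mul_mul_norm_sub_sq_le {x y : ℝ → H} {z : H}
    (hx : ∀ t ∈ Ici (0 : ℝ), HasDerivWithinAt x (y t - x t) (Ici 0) t)
    (hz : ∀ t ∈ Ici (0 : ℝ), 0 ≤ ⟪x t - y t, y t - z⟫)
    (hanti : AntitoneOn (fun t => ‖x t - y t‖) (Ici 0)) {t : ℝ} (ht : 0 ≤ t) :
    2 * t * ‖x t - y t‖ ^ 2 ≤ ‖x 0 - z‖ ^ 2 := by
  set K := ‖x t - y t‖ ^ 2
  have hsub : Icc 0 t ⊆ Ici 0 := Icc_subset_Ici_self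
  have hlyap : AntitoneOn (fun r => ‖x r - z‖ ^ 2 + 2 * K * r) (Icc 0 t) := by
    refine (convex_Icc 0 t).antitoneOn_of_hasDerivWithinAt_nonpos (fun r hr =>
      ((((hx r (hsub hr)).sub_const z).norm_sq.add
        ((hasDerivWithinAt_id r _).const_mul (2 * K))).mono hsub)) fun r hr => ?_
    rw [interior_Icc] at hr
    have hKr : K ≤ ‖x r - y r‖ ^ 2 :=
      pow_le_pow_left₀ (norm_nonneg _) (hanti hr.1.le ht hr.2.le) 2
    have hdecomp : ⟪x r - z, y r - x r⟫ = -‖x r - y r‖ ^ 2 - ⟪x r - y r, y r - z⟫ := by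
      rw [show x r - z = (x r - y r) + (y r - z) by abel, show y r - x r = -(x r - y r) by abel,
        inner_neg_right, inner_add_left, real_inner_self_eq_norm_sq, real_inner_comm]
      ring
    simp only [hdecomp, mul_one]
    linarith [hz r hr.1.le]
  have hend := hlyap ⟨le_rfl, ht⟩ ⟨ht, le_rfl⟩ ht
  simp only [mul_zero, add_zero] at hend
  linarith [sq_nonneg ‖x t - z‖]

end MonotoneOperator

theorem stmt_12_general {H : Type*} [NormedAddCommGroup H] [InnerProductSpace ℝ H]
    (A : H → Set H)
    (hmono : ∀ x y u v : H, u ∈ A x → v ∈ A y → 0 ≤ ⟪u - v, x - y⟫)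
    (p : ℕ) (hp : 1 ≤ p) (θ : ℝ) (hθ : 0 < θ)
    (x : ℝ → H) (lam : ℝ → ℝ) (y : ℝ → H)
    (hsol : IsCLSolution A p θ (Ici 0) x lam y)
    (hlam : MonotoneOn lam (Ici 0))
    (zstar : H) (hz : 0 ∈ A zstar) :
    ∀ t : ℝ, 0 < t →
      ‖x t - y t‖ ^ 2 ≤ ‖x 0 - zstar‖ ^ 2 / (2 * t)
      ∧ sInf ((fun ξ => ‖ξ‖) '' A (y t)) ≤ ‖x t - y t‖ / lam t
      ∧ ‖x t - y t‖ / lam t ≤ θ⁻¹ * (‖x 0 - zstar‖ ^ 2 / (2 * t)) ^ ((p : ℝ) / 2) := by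
  have hanti := hsol.antitoneOn_norm_sub hmono hlam
  obtain ⟨hpos, -, hres, hx, -, halg⟩ := hsol
  have hzero : ∀ t ∈ Ici (0 : ℝ), 0 ≤ ⟪x t - y t, y t - zstar⟫ := fun t ht => by
    simpa using (IsMonotoneOperator.smul hmono (hpos t ht).le) _ _ _ _ (hres t ht)
      (zero_mem_smul_set hz)
  intro t ht
  have hrate : ‖x t - y t‖ ^ 2 ≤ ‖x 0 - zstar‖ ^ 2 / (2 * t) := by
    rw [le_div_iff₀ (by positivity)]
    linarith [two_mul_mul_norm_sub_sq_le hx hzero hanti ht.le]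
  obtain ⟨a, ha, hxa⟩ := hres t ht.le
  have hnorm_a : ‖a‖ = ‖x t - y t‖ / lam t := by
    rw [← hxa, norm_smul, Real.norm_of_nonneg (hpos t ht.le).le,
      mul_div_cancel_left₀ _ (hpos t ht.le).ne']
  refine ⟨hrate, hnorm_a ▸ csInf_le ⟨0, ?_⟩ ⟨a, ha, rfl⟩, ?_⟩
  · rintro _ ⟨ξ, -, rfl⟩
    exact norm_nonneg ξ
  calc ‖x t - y t‖ / lam t = θ⁻¹ * (‖x t - y t‖ ^ 2) ^ ((p : ℝ) / 2) := by
        rw [div_eq_pow_div_of_mul_pow_pred_eq hp (hpos t ht.le).ne' hθ.ne'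
          (norm_sub_rev (x t) _ ▸ halg t ht.le), div_eq_inv_mul,
          ← Real.rpow_natCast_mul (norm_nonneg _), Nat.cast_ofNat, mul_div_cancel₀ _ two_ne_zero,
          Real.rpow_natCast]
    _ ≤ θ⁻¹ * (‖x 0 - zstar‖ ^ 2 / (2 * t)) ^ ((p : ℝ) / 2) := by gcongr

/-- Pointwise rate: along a global solution of the closed-loop control
system, for `t > 0`, `‖x(t) - y(t)‖² ≤ ‖x(0) - z*‖²/(2t)` and the residue satisfies
`res(y(t)) ≤ ‖x(t) - y(t)‖/λ(t) ≤ θ⁻¹ (‖x(0) - z*‖²/(2t))^{p/2}`. -/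
theorem stmt_12 {H : Type*} [NormedAddCommGroup H] [InnerProductSpace ℝ H] [CompleteSpace H]
    (A : H → Set H)
    (hmono : ∀ x y u v : H, u ∈ A x → v ∈ A y → 0 ≤ ⟪u - v, x - y⟫)
    (p : ℕ) (hp : 1 ≤ p) (θ : ℝ) (hθ : 0 < θ)
    (x : ℝ → H) (lam : ℝ → ℝ) (y : ℝ → H)
    (hsol : IsCLSolution A p θ (Ici 0) x lam y)
    (hlam : MonotoneOn lam (Ici 0))
    (zstar : H) (hz : 0 ∈ A zstar) :
    ∀ t : ℝ, 0 < t →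
      ‖x t - y t‖ ^ 2 ≤ ‖x 0 - zstar‖ ^ 2 / (2 * t)
      ∧ sInf ((fun ξ => ‖ξ‖) '' A (y t)) ≤ ‖x t - y t‖ / lam t
      ∧ ‖x t - y t‖ / lam t ≤ θ⁻¹ * (‖x 0 - zstar‖ ^ 2 / (2 * t)) ^ ((p : ℝ) / 2) :=
  stmt_12_general A hmono p hp θ hθ x lam y hsol hlam zstar hz
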